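/- arXiv:2309.00764 — 4 statements merged into one kernel-verified Lean document; each statement's English description precedes it below -/
import Mathlib

section
/- For every integer k ≥ 5, the sum of ℓ₁(α) over all partitions α of k−1 satisfying α₁ = α₂ is strictly greater than f(k). -/
namespace SquareKronecker

open Multiset

/-! ### generic countP lemmas -/

lemma countP_mono' {p q : ℕ → Prop} [DecidablePred p] [DecidablePred q] (s : Multiset ℕ)
    (h : ∀ x ∈ s, p x → q x) : s.countP p ≤ s.countP q := by
  induction s using Multiset.induction with
  | empty => simp
  | cons a s ih =>
    simp only [countP_cons]
    have h1 : s.countP p ≤ s.countP q := ih fun x hx => h x (mem_cons_of_mem hx)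
    have h2 : p a → q a := h a (mem_cons_self a s)
    by_cases hp : p a
    · rw [if_pos hp, if_pos (h2 hp)]; omega
    · rw [if_neg hp]; split <;> omega

lemma sup_mem (m : Multiset ℕ) (hm : m ≠ 0) : m.sup ∈ m := by
  induction m using Multiset.induction with
  | empty => simp at hm
  | cons a s ih =>
    rcases eq_or_ne s 0 with rfl | hs
    · simp
    · rcases le_total a s.sup with h | h
      · rw [sup_cons, sup_of_le_right h]
        exact mem_cons_of_mem (ih hs)
      · rw [sup_cons, sup_of_le_left h]
        exact mem_cons_self _ _

/-! ### sum of countP over range -/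

lemma sum_countP_range (N : ℕ) (m : Multiset ℕ) (h : ∀ x ∈ m, x ≤ N) :
    ∑ u ∈ Finset.range N, m.countP (u < ·) = m.sum := by
  induction m using Multiset.induction with
  | empty => simp
  | cons a s ih =>
    have ha : a ≤ N := h a (mem_cons_self a s)
    have hs : ∀ x ∈ s, x ≤ N := fun x hx => h x (mem_cons_of_mem hx)
    simp only [countP_cons, Finset.sum_add_distrib, ih hs, sum_cons]
    have : ∑ u ∈ Finset.range N, (if u < a then 1 else 0) = a := by
      rw [Finset.sum_ite, Finset.sum_const, Finset.sum_const]
      have : (Finset.range N).filter (· < a) = Finset.range a := by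
        ext u; simp; omega
      simp [this]
    omega

/-! ### conjugate -/

/-- The conjugate of a multiset of naturals, as a multiset. -/
def conj (m : Multiset ℕ) : Multiset ℕ :=
  (Multiset.range m.sup).map fun u => m.countP (u < ·)

lemma conj_sum (m : Multiset ℕ) : (conj m).sum = m.sum := by
  have : (conj m).sum = ∑ u ∈ Finset.range m.sup, m.countP (u < ·) := rfl
  rw [this, sum_countP_range _ _ fun x hx => le_sup hx]


lemma countP_conj_iff (m : Multiset ℕ) (t j : ℕ) :
    j < (conj m).countP (t < ·) ↔ t < m.countP (j < ·) := by
  classical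
  have hmap : (conj m).countP (t < ·) =
      ((Finset.range m.sup).filter (fun u => t < m.countP (u < ·))).card := by
    rw [conj, countP_map]
    rfl
  rw [hmap]
  set S := (Finset.range m.sup).filter (fun u => t < m.countP (u < ·)) with hS
  have hmono : ∀ u v : ℕ, u ≤ v → m.countP (v < ·) ≤ m.countP (u < ·) := by
    intro u v huv
    exact countP_mono' m fun x _ hx => lt_of_le_of_lt huv hx
  constructor
  · intro hcard
    -- show j ∈ S
    have hj : j ∈ S := by
      by_contra hj
      have hsub : S ⊆ Finset.range j := by
        intro u hu
        simp only [Finset.mem_range]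
        by_contra hu2
        push_neg at hu2
        apply hj
        simp only [hS, Finset.mem_filter, Finset.mem_range] at hu ⊢
        exact ⟨lt_of_le_of_lt hu2 hu.1, lt_of_lt_of_le hu.2 (hmono j u hu2)⟩
      have := Finset.card_le_card hsub
      simp only [Finset.card_range] at this
      omega
    simpa [hS] using (Finset.mem_filter.mp hj).2
  · intro ht
    have hpos : 0 < m.countP (j < ·) := by omega
    obtain ⟨x, hxm, hxj⟩ := countP_pos.mp (by omega : 0 < m.countP (j < ·))
    have hjsup : j < m.sup := lt_of_lt_of_le hxj (le_sup hxm)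
    have hsub : Finset.range (j + 1) ⊆ S := by
      intro u hu
      simp only [Finset.mem_range] at hu
      simp only [hS, Finset.mem_filter, Finset.mem_range]
      refine ⟨by omega, lt_of_lt_of_le ht (hmono u j (by omega))⟩
    have := Finset.card_le_card hsub
    simp only [Finset.card_range] at this
    omega

/-- entries of `conj m` are positive and at most `card m` -/
lemma conj_entries (m : Multiset ℕ) (hm : m ≠ 0) :
    ∀ x ∈ conj m, 0 < x ∧ x ≤ Multiset.card m := by
  intro x hx
  rw [conj, Multiset.mem_map] at hx
  obtain ⟨u, hu, rfl⟩ := hx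
  rw [Multiset.mem_range] at hu
  constructor
  · rw [countP_pos]
    exact ⟨m.sup, sup_mem m hm, hu⟩
  · exact countP_le_card _ m

lemma conj_injective {m₁ m₂ : Multiset ℕ} (h₁ : ∀ x ∈ m₁, 0 < x) (h₂ : ∀ x ∈ m₂, 0 < x)
    (h : conj m₁ = conj m₂) : m₁ = m₂ := by
  classical
  have key : ∀ j, m₁.countP (j < ·) = m₂.countP (j < ·) := by
    intro j
    have key2 : ∀ t, t < m₁.countP (j < ·) ↔ t < m₂.countP (j < ·) := by
      intro t
      rw [← countP_conj_iff m₁ t j, ← countP_conj_iff m₂ t j, h]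
    exact le_antisymm (le_of_forall_lt fun c hc => (key2 c).mp hc)
      (le_of_forall_lt fun c hc => (key2 c).mpr hc)
  have hcount : ∀ x, m₁.count x = m₂.count x := by
    intro x
    rcases Nat.eq_zero_or_pos x with rfl | hx
    · rw [Multiset.count_eq_zero_of_notMem, Multiset.count_eq_zero_of_notMem]
      · intro hmem; exact absurd (h₂ 0 hmem) (lt_irrefl 0)
      · intro hmem; exact absurd (h₁ 0 hmem) (lt_irrefl 0)
    · have split : ∀ (m : Multiset ℕ), m.countP (x - 1 < ·) = m.countP (x < ·) + m.count x := by
        intro m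
        induction m using Multiset.induction with
        | empty => simp
        | cons a s ih =>
          simp only [countP_cons, Multiset.count_cons, ih]
          split_ifs <;> omega
      have hA := split m₁
      have hB := split m₂
      rw [key (x-1), key x] at hA
      omega
  exact Multiset.ext.mpr hcount



open Multiset

/-! ### sorted getD lemma -/

lemma getD_le_of_sorted {l : List ℕ} (a : ℕ) (hle : ∀ b ∈ l, b ≤ a) (j : ℕ) :
    l.getD j 0 ≤ a := by
  by_cases h : j < l.length
  · rw [List.getD_eq_getElem l 0 h]
    exact hle _ (l.getElem_mem h)
  · rw [List.getD_eq_default l 0 (by omega)]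
    exact Nat.zero_le a

lemma sorted_getD_iff (l : List ℕ) (hl : l.Pairwise (· ≥ ·)) (j t : ℕ) :
    t < l.getD j 0 ↔ j < Multiset.countP (t < ·) (l : Multiset ℕ) := by
  induction l generalizing j with
  | nil => simp
  | cons a l ih =>
    rw [List.pairwise_cons] at hl
    obtain ⟨ha, hl⟩ := hl
    have hcoe : ((a :: l : List ℕ) : Multiset ℕ) = a ::ₘ (l : Multiset ℕ) := rfl
    rw [hcoe, countP_cons]
    cases j with
    | zero =>
      simp only [List.getD_cons_zero]
      by_cases hta : t < a
      · simp [hta]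
      · rw [if_neg hta]
        have : Multiset.countP (t < ·) (l : Multiset ℕ) = 0 :=
          countP_eq_zero.mpr fun b hb htb => hta (lt_of_lt_of_le htb (ha b (by exact_mod_cast hb)))
        simp [this]
        omega
    | succ j =>
      simp only [List.getD_cons_succ]
      by_cases hta : t < a
      · rw [if_pos hta, ih hl j]
        omega
      · rw [if_neg hta]
        have h0 : Multiset.countP (t < ·) (l : Multiset ℕ) = 0 :=
          countP_eq_zero.mpr fun b hb htb => hta (lt_of_lt_of_le htb (ha b (by exact_mod_cast hb)))
        rw [h0]
        have : l.getD j 0 ≤ t :=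
          getD_le_of_sorted t (fun b hb => le_trans (ha b hb) (not_lt.mp hta)) j
        constructor
        · omega
        · omega

/-- the `(j+1)`-th largest entry of a multiset (0-indexed `j`). -/
def V (m : Multiset ℕ) (j : ℕ) : ℕ := ((m.sort (· ≤ ·)).reverse).getD j 0

lemma V_iff (m : Multiset ℕ) (j t : ℕ) : t < V m j ↔ j < m.countP (t < ·) := by
  have hs : (m.sort (· ≤ ·)).reverse.Pairwise (· ≥ ·) := by
    rw [List.pairwise_reverse]
    exact pairwise_sort m (· ≤ ·)
  have h := sorted_getD_iff _ hs j t
  rwa [coe_reverse, sort_eq] at h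

lemma V_eq_of_iff {m₁ m₂ : Multiset ℕ} {j₁ j₂ : ℕ}
    (h : ∀ t, j₁ < m₁.countP (t < ·) ↔ j₂ < m₂.countP (t < ·)) : V m₁ j₁ = V m₂ j₂ := by
  refine le_antisymm (le_of_forall_lt fun c hc => ?_) (le_of_forall_lt fun c hc => ?_)
  · rw [V_iff] at hc ⊢
    exact (h c).mp hc
  · rw [V_iff] at hc ⊢
    exact (h c).mpr hc

/-- if the max has multiplicity at least two, the top two parts agree -/
lemma V01 (m : Multiset ℕ) (x : ℕ) (hx : x ∈ m) (h2 : 2 ≤ m.count x)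
    (hmax : ∀ y ∈ m, y ≤ x) : V m 0 = V m 1 := by
  apply V_eq_of_iff
  intro t
  constructor
  · intro h0
    obtain ⟨y, hy, hty⟩ := countP_pos.mp h0
    have htx : t < x := lt_of_lt_of_le hty (hmax y hy)
    have : m.count x ≤ m.countP (t < ·) := by
      rw [Multiset.count]
      exact countP_mono' m fun z _ hz => by rw [← hz]; exact htx
    omega
  · intro h1
    omega


/-- The `i`-th largest part (1-indexed) of a partition of `n`, with the convention that
`nthPart α i = 0` when `i` exceeds the number of parts. -/
def nthPart {n : ℕ} (α : n.Partition) (i : ℕ) : ℕ :=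
  ((α.parts.sort (· ≤ ·)).reverse).getD (i - 1) 0

/-- `ℓ₁ α`: the number of distinct part sizes occurring in the partition `α`. -/
def distinctParts {n : ℕ} (α : n.Partition) : ℕ :=
  α.parts.toFinset.card

/-- `f k`: the number of partitions of `k` all of whose parts are at least `3`
(equivalently, with no parts equal to `1` or `2`). -/
def f (k : ℕ) : ℕ :=
  (Finset.univ.filter (fun α : k.Partition => ∀ p ∈ α.parts, 3 ≤ p)).card

lemma nthPart_eq_V {n : ℕ} (α : n.Partition) (i : ℕ) : nthPart α i = V α.parts (i - 1) := rfl

/-- the multiset underlying `Φ β` : decrement one copy of the maximum of the conjugate. -/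
def PhiM (m : Multiset ℕ) : Multiset ℕ :=
  (Multiset.card m - 1) ::ₘ (conj m).erase (Multiset.card m)

/-- the injection -/
def Phi {k : ℕ} (β : k.Partition) : (k - 1).Partition :=
  if h : (PhiM β.parts).sum = k - 1 then Nat.Partition.ofSums (k - 1) (PhiM β.parts) h
  else default

section Structural

variable {k : ℕ} (hk : 5 ≤ k) (β : k.Partition) (hβ : ∀ p ∈ β.parts, 3 ≤ p)

include hk hβ

lemma parts_ne_zero : β.parts ≠ 0 := by
  intro h0
  have := β.parts_sum
  rw [h0] at this
  simp at this
  omega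

lemma card_pos : 1 ≤ Multiset.card β.parts := by
  have := parts_ne_zero hk β hβ
  rcases Multiset.card_pos.mpr this with h
  omega

lemma sup_ge_three : 3 ≤ β.parts.sup := by
  obtain ⟨x, hx⟩ := Multiset.exists_mem_of_ne_zero (parts_ne_zero hk β hβ)
  exact le_trans (hβ x hx) (le_sup hx)

lemma count_card_conj : 3 ≤ (conj β.parts).count (Multiset.card β.parts) := by
  classical
  rw [conj, count_map]
  have : Multiset.range β.parts.sup = (Finset.range β.parts.sup).val := rfl
  rw [this, ← Finset.filter_val]
  show 3 ≤ ((Finset.range β.parts.sup).filter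
    (fun a => Multiset.card β.parts = β.parts.countP (a < ·))).card
  have hsub : ({0, 1, 2} : Finset ℕ) ⊆ (Finset.range β.parts.sup).filter
      (fun a => Multiset.card β.parts = β.parts.countP (a < ·)) := by
    intro u hu
    have hu3 : u < 3 := by fin_cases hu <;> omega
    rw [Finset.mem_filter, Finset.mem_range]
    refine ⟨lt_of_lt_of_le hu3 (sup_ge_three hk β hβ), ?_⟩
    exact (countP_eq_card.mpr fun a ha => lt_of_lt_of_le hu3 (hβ a ha)).symm
  have := Finset.card_le_card hsub
  simpa using this

lemma card_mem_conj : Multiset.card β.parts ∈ conj β.parts := by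
  rw [← count_pos]
  have := count_card_conj hk β hβ
  omega

lemma PhiM_sum : (PhiM β.parts).sum = k - 1 := by
  have hmem := card_mem_conj hk β hβ
  have hcons := Multiset.cons_erase hmem
  have hsum : (conj β.parts).sum = k := by rw [conj_sum, β.parts_sum]
  have h2 : Multiset.card β.parts + ((conj β.parts).erase (Multiset.card β.parts)).sum = k := by
    rw [← sum_cons, hcons, hsum]
  have hr := card_pos hk β hβ
  rw [PhiM, sum_cons]
  omega

lemma Phi_parts : (Phi β).parts = (PhiM β.parts).filter (· ≠ 0) := by
  rw [Phi, dif_pos (PhiM_sum hk β hβ)]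
  exact Nat.Partition.ofSums_parts _ _ _

lemma Phi_parts_le : ∀ x ∈ (Phi β).parts, x ≤ Multiset.card β.parts := by
  intro x hx
  rw [Phi_parts hk β hβ] at hx
  have hx' := Multiset.mem_of_mem_filter hx
  rw [PhiM, Multiset.mem_cons] at hx'
  rcases hx' with rfl | hx'
  · omega
  · exact (conj_entries β.parts (parts_ne_zero hk β hβ) x
      (Multiset.mem_of_mem_erase hx')).2

lemma count_card_Phi : 2 ≤ (Phi β).parts.count (Multiset.card β.parts) := by
  classical
  have hr1 := card_pos hk β hβ
  rcases Nat.lt_or_ge (Multiset.card β.parts) 2 with h2 | h2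
  · -- Multiset.card β.parts = 1 : all parts are equal to 1 and there are at least k - 1 ≥ 4 of them
    have hr1' : Multiset.card β.parts = 1 := by omega
    have hall : ∀ x ∈ (Phi β).parts, x = 1 := by
      intro x hx
      have := Phi_parts_le hk β hβ x hx
      have := (Phi β).parts_pos hx
      omega
    have hsum : (Phi β).parts.sum = k - 1 := (Phi β).parts_sum
    have hcard : k - 1 ≤ Multiset.card (Phi β).parts := by
      have := Multiset.sum_le_card_nsmul (Phi β).parts 1 (fun x hx => le_of_eq (hall x hx))
      simpa [hsum] using this
    have : (Phi β).parts.count 1 = Multiset.card (Phi β).parts :=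
      countP_eq_card.mpr fun a ha => (hall a ha).symm
    rw [hr1'] at *
    rw [Multiset.count] at this ⊢
    omega
  · -- Multiset.card β.parts ≥ 2
    have h3 := count_card_conj hk β hβ
    rw [Phi_parts hk β hβ, count_filter, if_pos (by omega : Multiset.card β.parts ≠ 0), PhiM]
    rw [Multiset.count_cons, if_neg (show ¬ Multiset.card β.parts = Multiset.card β.parts - 1 by omega),
      count_erase_self]
    omega

lemma card_mem_Phi : Multiset.card β.parts ∈ (Phi β).parts := by
  rw [← count_pos]
  have := count_card_Phi hk β hβ
  omega

lemma sup_Phi : (Phi β).parts.sup = Multiset.card β.parts := by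
  refine le_antisymm (sup_le.mpr (Phi_parts_le hk β hβ)) (le_sup (card_mem_Phi hk β hβ))

lemma Phi_mem_A : nthPart (Phi β) 1 = nthPart (Phi β) 2 := by
  rw [nthPart_eq_V, nthPart_eq_V]
  show V (Phi β).parts 0 = V (Phi β).parts 1
  exact V01 _ (Multiset.card β.parts) (card_mem_Phi hk β hβ) (count_card_Phi hk β hβ)
    (Phi_parts_le hk β hβ)

lemma conj_from_Phi (h2 : 2 ≤ Multiset.card β.parts) :
    conj β.parts = Multiset.card β.parts ::ₘ ((Phi β).parts.erase (Multiset.card β.parts - 1)) := by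
  have hfil : (Phi β).parts = PhiM β.parts := by
    rw [Phi_parts hk β hβ, Multiset.filter_eq_self]
    intro a ha
    rw [PhiM, Multiset.mem_cons] at ha
    rcases ha with rfl | ha
    · omega
    · have := (conj_entries β.parts (parts_ne_zero hk β hβ) a (Multiset.mem_of_mem_erase ha)).1
      omega
  rw [hfil, PhiM, Multiset.erase_cons_head,
    Multiset.cons_erase (card_mem_conj hk β hβ)]

end Structural



lemma Phi_inj {k : ℕ} (hk : 5 ≤ k) {β₁ β₂ : k.Partition}
    (h₁ : ∀ p ∈ β₁.parts, 3 ≤ p) (h₂ : ∀ p ∈ β₂.parts, 3 ≤ p)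
    (h : Phi β₁ = Phi β₂) : β₁ = β₂ := by
  have hr : Multiset.card β₁.parts = Multiset.card β₂.parts := by
    rw [← sup_Phi hk β₁ h₁, ← sup_Phi hk β₂ h₂, h]
  rcases Nat.lt_or_ge (Multiset.card β₁.parts) 2 with hlt | hge
  · -- both have exactly one part, which must be k
    have hc1 : Multiset.card β₁.parts = 1 := by
      have := card_pos hk β₁ h₁; omega
    have hc2 : Multiset.card β₂.parts = 1 := by omega
    obtain ⟨a, ha⟩ := Multiset.card_eq_one.mp hc1
    obtain ⟨b, hb⟩ := Multiset.card_eq_one.mp hc2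
    have hsa : a = k := by have := β₁.parts_sum; rw [ha] at this; simpa using this
    have hsb : b = k := by have := β₂.parts_sum; rw [hb] at this; simpa using this
    exact Nat.Partition.ext (by rw [ha, hb, hsa, hsb])
  · have e₁ := conj_from_Phi hk β₁ h₁ hge
    have e₂ := conj_from_Phi hk β₂ h₂ (by omega)
    apply Nat.Partition.ext
    apply conj_injective (fun x hx => β₁.parts_pos hx) (fun x hx => β₂.parts_pos hx)
    rw [e₁, e₂, hr, h]


/-- For every integer `k ≥ 5`, the sum of `ℓ₁(α)` over all partitions `α` of `k - 1`
satisfying `α₁ = α₂` is strictly greater than `f k`. -/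
theorem sum_distinctParts_gt_f (k : ℕ) (hk : 5 ≤ k) :
    f k < ∑ α ∈ Finset.univ.filter
      (fun α : (k - 1).Partition => nthPart α 1 = nthPart α 2), distinctParts α := by
  classical
  set A := Finset.univ.filter
      (fun α : (k - 1).Partition => nthPart α 1 = nthPart α 2) with hA
  -- the injection gives f k ≤ A.card
  have hinj : f k ≤ A.card := by
    apply Finset.card_le_card_of_injOn Phi
    · intro β hβ
      rw [Finset.mem_coe, Finset.mem_filter] at hβ
      rw [Finset.mem_coe, hA, Finset.mem_filter]
      exact ⟨Finset.mem_univ _, Phi_mem_A hk β hβ.2⟩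
    · intro β₁ hβ₁ β₂ hβ₂ h
      rw [Finset.mem_coe, Finset.mem_filter] at hβ₁ hβ₂
      exact Phi_inj hk hβ₁.2 hβ₂.2 h
  -- every partition in A has at least one distinct part size
  have hone : ∀ α ∈ A, 1 ≤ distinctParts α := by
    intro α _
    have hne : α.parts ≠ 0 := by
      intro h0
      have := α.parts_sum
      rw [h0] at this
      simp at this
      omega
    have := Multiset.toFinset_nonempty.mpr hne
    rw [distinctParts]
    exact Finset.card_pos.mpr this
  -- the witness partition (2, 2, 1, …, 1)
  have hwsum : (2 ::ₘ 2 ::ₘ Multiset.replicate (k - 5) 1).sum = k - 1 := by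
    simp [Multiset.sum_replicate]
    omega
  set w : (k - 1).Partition := Nat.Partition.ofSums (k - 1) _ hwsum with hw
  have hwparts : w.parts = 2 ::ₘ 2 ::ₘ Multiset.replicate (k - 5) 1 := by
    rw [hw, Nat.Partition.ofSums_parts, Multiset.filter_eq_self]
    intro a ha
    rcases Multiset.mem_cons.mp ha with rfl | ha
    · omega
    rcases Multiset.mem_cons.mp ha with rfl | ha
    · omega
    · rw [Multiset.eq_of_mem_replicate ha]; omega
  have hwmax : ∀ y ∈ w.parts, y ≤ 2 := by
    intro y hy
    rw [hwparts] at hy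
    rcases Multiset.mem_cons.mp hy with rfl | hy
    · omega
    rcases Multiset.mem_cons.mp hy with rfl | hy
    · omega
    · rw [Multiset.eq_of_mem_replicate hy]; omega
  have hwcount : w.parts.count 2 = 2 := by
    rw [hwparts, Multiset.count_cons_self, Multiset.count_cons_self,
      Multiset.count_replicate]
    norm_num
  have hwA : w ∈ A := by
    rw [hA, Finset.mem_filter]
    refine ⟨Finset.mem_univ _, ?_⟩
    rw [nthPart_eq_V, nthPart_eq_V]
    show V w.parts 0 = V w.parts 1
    exact V01 _ 2 (by rw [← count_pos, hwcount]; omega) (by omega) hwmax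
  rcases Nat.lt_or_ge k 6 with hk5 | hk6
  · -- k = 5
    have hk' : k = 5 := by omega
    subst hk'
    -- f 5 = 1
    have hf5 : f 5 = 1 := by
      rw [f]
      have : (Finset.univ.filter (fun α : Nat.Partition 5 => ∀ p ∈ α.parts, 3 ≤ p))
          = {Nat.Partition.indiscrete 5} := by
        ext β
        simp only [Finset.mem_filter, Finset.mem_univ, true_and, Finset.mem_singleton]
        constructor
        · intro hβ
          have hc : Multiset.card β.parts • 3 ≤ β.parts.sum :=
            Multiset.card_nsmul_le_sum hβ
          rw [β.parts_sum, smul_eq_mul] at hc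
          have hne : β.parts ≠ 0 := by
            intro h0
            have := β.parts_sum
            rw [h0] at this
            simp at this
          have hcpos : 0 < Multiset.card β.parts := Multiset.card_pos.mpr hne
          have hc1 : Multiset.card β.parts = 1 := by omega
          obtain ⟨a, ha⟩ := Multiset.card_eq_one.mp hc1
          have : a = 5 := by have := β.parts_sum; rw [ha] at this; simpa using this
          subst this
          exact Nat.Partition.ext (by rw [ha, Nat.Partition.indiscrete_parts (by norm_num)])
        · intro hβ
          subst hβ
          intro p hp
          rw [Nat.Partition.indiscrete_parts (by norm_num), Multiset.mem_singleton] at hp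
          omega
      rw [this, Finset.card_singleton]
    -- second element of A : (1,1,1,1)
    have husum : (Multiset.replicate 4 1).sum = 5 - 1 := by simp
    set u : (5 - 1 : ℕ).Partition := Nat.Partition.ofSums (5 - 1) _ husum with hu
    have huparts : u.parts = Multiset.replicate 4 1 := by
      rw [hu, Nat.Partition.ofSums_parts, Multiset.filter_eq_self]
      intro a ha
      rw [Multiset.eq_of_mem_replicate ha]; omega
    have huA : u ∈ A := by
      rw [hA, Finset.mem_filter]
      refine ⟨Finset.mem_univ _, ?_⟩
      rw [nthPart_eq_V, nthPart_eq_V]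
      show V u.parts 0 = V u.parts 1
      refine V01 _ 1 ?_ ?_ ?_
      · rw [huparts]; exact Multiset.mem_replicate.mpr ⟨by norm_num, rfl⟩
      · rw [huparts, Multiset.count_replicate_self]; norm_num
      · intro y hy; rw [huparts] at hy; rw [Multiset.eq_of_mem_replicate hy]
    have hwu : w ≠ u := by
      intro h
      have : w.parts.count 2 = u.parts.count 2 := by rw [h]
      rw [hwcount, huparts, Multiset.count_replicate] at this
      norm_num at this
    have hsub : ({w, u} : Finset ((5 - 1 : ℕ).Partition)) ⊆ A := by
      intro x hx
      rcases Finset.mem_insert.mp hx with rfl | hx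
      · exact hwA
      · rw [Finset.mem_singleton] at hx; subst hx; exact huA
    have h2 : 2 ≤ ∑ α ∈ A, distinctParts α := by
      have hle := Finset.sum_le_sum_of_subset (f := distinctParts) hsub
      rw [Finset.sum_pair hwu] at hle
      have l1 := hone w hwA
      have l2 := hone u huA
      omega
    rw [hA] at h2 ⊢
    omega
  · -- k ≥ 6 : w has two distinct part sizes
    have hwd : 2 ≤ distinctParts w := by
      rw [distinctParts, hwparts]
      have h15 : (1 : ℕ) ∈ (2 ::ₘ 2 ::ₘ Multiset.replicate (k - 5) 1).toFinset := by
        rw [Multiset.mem_toFinset]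
        refine Multiset.mem_cons_of_mem (Multiset.mem_cons_of_mem ?_)
        exact Multiset.mem_replicate.mpr ⟨by omega, rfl⟩
      have h25 : (2 : ℕ) ∈ (2 ::ₘ 2 ::ₘ Multiset.replicate (k - 5) 1).toFinset := by
        rw [Multiset.mem_toFinset]
        exact Multiset.mem_cons_self _ _
      have : ({1, 2} : Finset ℕ) ⊆ (2 ::ₘ 2 ::ₘ Multiset.replicate (k - 5) 1).toFinset := by
        intro x hx
        rcases Finset.mem_insert.mp hx with rfl | hx
        · exact h15
        · rw [Finset.mem_singleton] at hx; subst hx; exact h25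
      have := Finset.card_le_card this
      simpa using this
    have hstrict : A.card < ∑ α ∈ A, distinctParts α := by
      rw [Finset.card_eq_sum_ones]
      exact Finset.sum_lt_sum hone ⟨w, hwA, by omega⟩
    omega


end SquareKronecker
end

section
/- Let m ≥ 1 be an integer and let β be a partition fitting inside the m×m square, with m×m-complement β*. Then: ℓ₁(β*) = ℓ₁(β) − 1 if β₁ = m and β has exactly m parts; ℓ₁(β*) = ℓ₁(β) if exactly one of the two conditions 'β₁ = m' and 'β has exactly m parts' holds; and ℓ₁(β*) = ℓ₁(β) + 1 if neither condition holds. -/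
/-!
Pad β with zeros to m rows `β_m ≤ … ≤ β_1 ≤ m`. The parts of β* are the nonzero values `m - β_i`,
and `x ↦ m - x` is injective on `[0, m]` with only `m` sent to `0`; so the part sizes of β* are in
bijection with the distinct row lengths other than `m`. These row lengths are the part sizes of β,
together with `0` exactly when β has fewer than `m` parts, and `m` is one of them exactly when
`β₁ = m`.
-/

namespace SquareKronecker

/-- The `m × m`-complement of a partition `β` fitting inside the `m × m` square: the partition
whose parts are the nonzero values among `m - β_{m+1-i}` for `i = 1, …, m`. -/
def mmComplement (m : ℕ) {n : ℕ} (β : n.Partition) :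
    Nat.Partition (((Finset.range m).val.map (fun i => m - nthPart β (m - i))).sum) :=
  Nat.Partition.ofMultiset _

lemma le_nthPart_one {n : ℕ} (β : n.Partition) {x : ℕ} (hx : x ∈ β.parts) :
    x ≤ nthPart β 1 := by
  have hmem : x ∈ (β.parts.sort (· ≤ ·)).reverse := by simpa using hx
  have hsorted : ((β.parts.sort (· ≤ ·)).reverse).Pairwise (· ≥ ·) :=
    List.pairwise_reverse.mpr (β.parts.pairwise_sort _)
  unfold nthPart
  generalize (β.parts.sort (· ≤ ·)).reverse = L at *
  cases L with
  | nil => simp at hmem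
  | cons a L =>
    rcases List.mem_cons.mp hmem with rfl | hx
    · exact le_rfl
    · exact (List.pairwise_cons.mp hsorted).1 x hx

lemma nthPart_one_mem {n : ℕ} (β : n.Partition) (hβ : β.parts ≠ 0) : nthPart β 1 ∈ β.parts := by
  have hne : (β.parts.sort (· ≤ ·)).reverse ≠ [] := by
    rwa [Ne, List.reverse_eq_nil_iff, ← Multiset.coe_eq_zero, Multiset.sort_eq]
  have hmem : ∀ x, x ∈ (β.parts.sort (· ≤ ·)).reverse → x ∈ β.parts := by simp
  unfold nthPart
  generalize (β.parts.sort (· ≤ ·)).reverse = L at *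
  cases L with
  | nil => exact absurd rfl hne
  | cons a L => exact hmem a List.mem_cons_self

lemma mem_parts_iff_nthPart_one_eq {n m : ℕ} (β : n.Partition) (hβ : nthPart β 1 ≤ m)
    (hm : m ≠ 0) : m ∈ β.parts ↔ nthPart β 1 = m := by
  refine ⟨fun h => le_antisymm hβ (le_nthPart_one β h), fun h => h ▸ nthPart_one_mem β ?_⟩
  intro h0
  simp [nthPart, h0] at h
  omega

lemma map_nthPart_succ_range {n m : ℕ} (β : n.Partition) (hβ : β.parts.card ≤ m) :
    (List.range m).map (fun i => nthPart β (i + 1)) =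
      (β.parts.sort (· ≤ ·)).reverse ++ List.replicate (m - β.parts.card) 0 := by
  rw [← Multiset.length_sort (· ≤ ·), ← List.length_reverse] at hβ ⊢
  unfold nthPart
  generalize (β.parts.sort (· ≤ ·)).reverse = L at *
  refine List.ext_getElem (by simp; omega) fun i hi _ => ?_
  simp only [List.getElem_map, List.getElem_range, Nat.add_sub_cancel, List.getElem_append]
  split_ifs with h
  · exact List.getD_eq_getElem _ _ h
  · simpa using List.getD_eq_default _ _ (not_lt.mp h)

def paddedParts (m : ℕ) {n : ℕ} (β : n.Partition) : Multiset ℕ :=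
  β.parts + Multiset.replicate (m - β.parts.card) 0

lemma map_nthPart_range {n m : ℕ} (β : n.Partition) (hβ : β.parts.card ≤ m) :
    (Finset.range m).val.map (fun i => nthPart β (m - i)) = paddedParts m β := by
  have hrange : (List.range m).reverse = (List.range m).map (m - 1 - ·) := by
    simpa [← List.range_eq_range'] using @List.reverse_range' 0 m
  have hrev : (List.range m).map (fun i => nthPart β (m - i)) =
      ((List.range m).map (fun i => nthPart β (i + 1))).reverse := by
    rw [← List.map_reverse, hrange, List.map_map]
    refine List.map_congr_left fun i hi => ?_
    rw [List.mem_range] at hi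
    simp only [Function.comp_apply]
    congr 1
    omega
  rw [Finset.range_val, Multiset.range, Multiset.map_coe, hrev, Multiset.coe_reverse,
    map_nthPart_succ_range β hβ, ← Multiset.coe_add, Multiset.coe_reverse, Multiset.sort_eq,
    Multiset.coe_replicate, paddedParts]

lemma le_of_mem_paddedParts {n m : ℕ} (β : n.Partition) (hβ : nthPart β 1 ≤ m) {x : ℕ}
    (hx : x ∈ paddedParts m β) : x ≤ m := by
  rcases Multiset.mem_add.mp hx with hx | hx
  · exact (le_nthPart_one β hx).trans hβ
  · rw [Multiset.eq_of_mem_replicate hx]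
    exact Nat.zero_le m

lemma mem_paddedParts_iff_nthPart_one_eq {n m : ℕ} (β : n.Partition) (hβ : nthPart β 1 ≤ m)
    (hm : m ≠ 0) : m ∈ paddedParts m β ↔ nthPart β 1 = m := by
  rw [paddedParts, Multiset.mem_add, Multiset.mem_replicate, mem_parts_iff_nthPart_one_eq β hβ hm]
  omega

lemma card_toFinset_paddedParts {n m : ℕ} (β : n.Partition) (hβ : β.parts.card ≤ m) :
    (paddedParts m β).toFinset.card = distinctParts β + if β.parts.card = m then 0 else 1 := by
  by_cases h : β.parts.card = m
  · simp [paddedParts, distinctParts, h]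
  · have h0 : 0 ∉ β.parts.toFinset := fun h => (β.parts_pos (Multiset.mem_toFinset.mp h)).false
    rw [paddedParts, Multiset.toFinset_add, Multiset.toFinset_replicate, if_neg (by omega),
      if_neg h, Finset.union_comm, ← Finset.insert_eq, Finset.card_insert_of_notMem h0,
      distinctParts]

lemma card_image_tsub_erase_zero {S : Finset ℕ} {m : ℕ} (hS : ∀ x ∈ S, x ≤ m) :
    ((S.image (m - ·)).erase 0).card = (S.erase m).card := by
  have hzero : 0 ∈ S.image (m - ·) ↔ m ∈ S := by
    refine ⟨fun h => ?_, fun h => Finset.mem_image.mpr ⟨m, h, Nat.sub_self m⟩⟩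
    obtain ⟨x, hx, hx0⟩ := Finset.mem_image.mp h
    rwa [show x = m by have := hS x hx; omega] at hx
  have hinj : Set.InjOn (m - ·) (S : Set ℕ) := fun a ha b hb hab => by
    have := hS a ha; have := hS b hb; simp only at hab; omega
  rw [Finset.card_erase_eq_ite, Finset.card_erase_eq_ite, Finset.card_image_of_injOn hinj]
  simp only [hzero]

lemma mmComplement_parts {n m : ℕ} (β : n.Partition) (hβ : β.parts.card ≤ m) :
    (mmComplement m β).parts = ((paddedParts m β).map (m - ·)).filter (· ≠ 0) := by
  rw [← map_nthPart_range β hβ, Multiset.map_map]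
  rfl

lemma distinctParts_mmComplement_eq {n m : ℕ} (β : n.Partition) (hβ₁ : nthPart β 1 ≤ m)
    (hβ₂ : β.parts.card ≤ m) :
    distinctParts (mmComplement m β) = ((paddedParts m β).toFinset.erase m).card := by
  rw [distinctParts, mmComplement_parts β hβ₂, Multiset.toFinset_filter, Multiset.toFinset_map,
    Finset.filter_ne', card_image_tsub_erase_zero]
  exact fun x hx => le_of_mem_paddedParts β hβ₁ (Multiset.mem_toFinset.mp hx)

/-- Let `m ≥ 1` and let `β` be a partition fitting inside the `m × m` square, with
`m × m`-complement `β*`. Then `ℓ₁(β*) = ℓ₁(β) - 1` if `β₁ = m` and `β` has exactly `m` parts;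
`ℓ₁(β*) = ℓ₁(β)` if exactly one of these two conditions holds; and `ℓ₁(β*) = ℓ₁(β) + 1`
if neither holds. -/
theorem distinctParts_mmComplement (m n : ℕ) (hm : 1 ≤ m) (β : n.Partition)
    (hβ₁ : nthPart β 1 ≤ m) (hβ₂ : β.parts.card ≤ m) :
    (nthPart β 1 = m ∧ β.parts.card = m →
      distinctParts (mmComplement m β) = distinctParts β - 1) ∧
    (Xor' (nthPart β 1 = m) (β.parts.card = m) →
      distinctParts (mmComplement m β) = distinctParts β) ∧
    (¬ nthPart β 1 = m ∧ ¬ β.parts.card = m →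
      distinctParts (mmComplement m β) = distinctParts β + 1) := by
  have hmem := mem_paddedParts_iff_nthPart_one_eq β hβ₁ (by omega)
  have key : distinctParts (mmComplement m β) + (if nthPart β 1 = m then 1 else 0) =
      distinctParts β + if β.parts.card = m then 0 else 1 := by
    rw [distinctParts_mmComplement_eq β hβ₁ hβ₂, ← card_toFinset_paddedParts β hβ₂]
    by_cases h : nthPart β 1 = m
    · rw [if_pos h, Finset.card_erase_add_one (Multiset.mem_toFinset.mpr (hmem.mpr h))]
    · rw [if_neg h, add_zero, Finset.erase_eq_of_notMem (by simpa [hmem] using h)]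
  refine ⟨fun ⟨h₁, h₂⟩ => ?_, fun h => ?_, fun ⟨h₁, h₂⟩ => ?_⟩
  · simp only [h₁, h₂, if_true] at key; omega
  · rcases h with ⟨h₁, h₂⟩ | ⟨h₂, h₁⟩ <;> simp only [h₁, h₂, if_true, if_false] at key <;> omega
  · simp only [h₁, h₂, if_false] at key; omega

end SquareKronecker
end

section
/- For every integer k ≥ 2, the sum of ℓ₁(β) over all partitions β of k−1 satisfying β₁ > β₂ equals the sum of ℓ₁(α) over all partitions α of k−2, plus the number of partitions α of k−2 satisfying α₁ = α₂ (where for k = 2 the empty partition of 0 satisfies α₁ = α₂ = 0). -/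
namespace SquareKronecker

lemma sup_mem_s5 (s : Multiset ℕ) (h : s ≠ 0) : s.sup ∈ s := by
  induction s using Multiset.induction_on with
  | empty => simp at h
  | cons a t ih =>
    rw [Multiset.sup_cons]
    rcases le_total t.sup a with h1 | h1
    · simp [sup_eq_left.mpr h1]
    · rw [sup_eq_right.mpr h1]
      by_cases ht : t = 0
      · subst ht; simp at h1 ⊢; omega
      · exact Multiset.mem_cons_of_mem (ih ht)

lemma getD_zero_sorted (l : List ℕ) (h : l.Pairwise (· ≥ ·)) :
    l.getD 0 0 = (l : Multiset ℕ).sup := by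
  cases l with
  | nil => simp
  | cons a t =>
    have : (t : Multiset ℕ).sup ≤ a := by
      rw [Multiset.sup_le]
      intro b hb
      exact List.rel_of_pairwise_cons h hb
    have hs : ((a :: t : List ℕ) : Multiset ℕ).sup = a := by
      rw [← Multiset.cons_coe, Multiset.sup_cons, sup_eq_left.mpr this]
    rw [hs, List.getD_cons_zero]

lemma getD_one_sorted (l : List ℕ) (h : l.Pairwise (· ≥ ·)) :
    l.getD 1 0 = ((l : Multiset ℕ).erase (l : Multiset ℕ).sup).sup := by
  cases l with
  | nil => simp
  | cons a t =>
    have hle : (t : Multiset ℕ).sup ≤ a := by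
      rw [Multiset.sup_le]
      intro b hb
      exact List.rel_of_pairwise_cons h hb
    have hsup : ((a :: t : List ℕ) : Multiset ℕ).sup = a := by
      rw [← Multiset.cons_coe, Multiset.sup_cons, sup_eq_left.mpr hle]
    rw [hsup]
    have : ((a :: t : List ℕ) : Multiset ℕ).erase a = (t : Multiset ℕ) := by
      rw [← Multiset.cons_coe, Multiset.erase_cons_head]
    rw [this]
    simpa using getD_zero_sorted t h.of_cons

lemma reverse_sort_sorted {n : ℕ} (β : n.Partition) :
    (β.parts.sort (· ≤ ·)).reverse.Pairwise (· ≥ ·) := by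
  rw [List.pairwise_reverse]
  exact Multiset.pairwise_sort (s := β.parts) (r := (· ≤ ·))

lemma coe_reverse_sort {n : ℕ} (β : n.Partition) :
    ((β.parts.sort (· ≤ ·)).reverse : Multiset ℕ) = β.parts := by
  rw [Multiset.coe_reverse, Multiset.sort_eq]

lemma nthPart_one {n : ℕ} (β : n.Partition) : nthPart β 1 = β.parts.sup := by
  rw [nthPart, show (1:ℕ) - 1 = 0 from rfl,
    getD_zero_sorted _ (reverse_sort_sorted β), coe_reverse_sort]

lemma nthPart_two {n : ℕ} (β : n.Partition) :
    nthPart β 2 = (β.parts.erase β.parts.sup).sup := by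
  rw [nthPart, show (2:ℕ) - 1 = 1 from rfl,
    getD_one_sorted _ (reverse_sort_sorted β), coe_reverse_sort]


lemma erase_sup_sup_le (s : Multiset ℕ) : (s.erase s.sup).sup ≤ s.sup :=
  Multiset.sup_le.mpr fun b hb => Multiset.le_sup (Multiset.mem_of_mem_erase hb)

def stepM (s : Multiset ℕ) : Multiset ℕ := (s.sup + 1) ::ₘ s.erase s.sup

lemma stepM_sum (s : Multiset ℕ) : (stepM s).sum = s.sum + 1 := by
  rw [stepM, Multiset.sum_cons]
  by_cases h : s = 0
  · simp [h]
  · have := Multiset.sum_erase (sup_mem_s5 s h)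
    omega

lemma stepM_sup (s : Multiset ℕ) : (stepM s).sup = s.sup + 1 := by
  rw [stepM, Multiset.sup_cons, sup_eq_left.mpr (by have := erase_sup_sup_le s; omega)]

lemma stepM_erase_sup (s : Multiset ℕ) :
    (stepM s).erase (stepM s).sup = s.erase s.sup := by
  rw [stepM_sup, stepM, Multiset.erase_cons_head]

lemma stepM_cond (s : Multiset ℕ) :
    ((stepM s).erase (stepM s).sup).sup < (stepM s).sup := by
  rw [stepM_erase_sup, stepM_sup]
  have := erase_sup_sup_le s
  omega

lemma stepM_card (s : Multiset ℕ) (hpos : ∀ p ∈ s, 0 < p) :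
    (stepM s).toFinset.card
      = s.toFinset.card + (if s.sup = (s.erase s.sup).sup then 1 else 0) := by
  by_cases h0 : s = 0
  · subst h0; simp [stepM]
  have hM : s.sup ∈ s := sup_mem_s5 s h0
  have hM1 : 1 ≤ s.sup := hpos _ hM
  have hnotmem : s.sup + 1 ∉ (s.erase s.sup).toFinset := by
    intro hc
    have := Multiset.le_sup (Multiset.mem_of_mem_erase (Multiset.mem_toFinset.mp hc))
    omega
  rw [stepM, Multiset.toFinset_cons, Finset.card_insert_of_notMem hnotmem]
  by_cases hc : s.sup = (s.erase s.sup).sup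
  · rw [if_pos hc]
    have hne : s.erase s.sup ≠ 0 := by
      intro h; rw [h] at hc; simp at hc; omega
    have hmem : s.sup ∈ s.erase s.sup := by
      have := sup_mem_s5 _ hne; rwa [← hc] at this
    have : (s.erase s.sup).toFinset = s.toFinset := by
      apply Finset.Subset.antisymm
      · intro x hx
        exact Multiset.mem_toFinset.mpr
          (Multiset.mem_of_mem_erase (Multiset.mem_toFinset.mp hx))
      · intro x hx
        rcases eq_or_ne x s.sup with rfl | hne'
        · exact Multiset.mem_toFinset.mpr hmem
        · exact Multiset.mem_toFinset.mpr
            (Multiset.mem_erase_of_ne hne' |>.mpr (Multiset.mem_toFinset.mp hx))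
    rw [this]
  · rw [if_neg hc]
    have hnm : s.sup ∉ (s.erase s.sup).toFinset := by
      intro hx
      have h1 := Multiset.le_sup (Multiset.mem_toFinset.mp hx)
      have h2 := erase_sup_sup_le s
      exact hc (le_antisymm h1 h2)
    have hst : s.toFinset = insert s.sup (s.erase s.sup).toFinset := by
      conv_lhs => rw [← Multiset.cons_erase hM]
      rw [Multiset.toFinset_cons]
    rw [hst, Finset.card_insert_of_notMem hnm]

def invM (t : Multiset ℕ) : Multiset ℕ :=
  t.erase t.sup + (if t.sup ≤ 1 then 0 else {t.sup - 1})

lemma invM_stepM (s : Multiset ℕ) (hpos : ∀ p ∈ s, 0 < p) : invM (stepM s) = s := by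
  rw [invM, stepM_erase_sup, stepM_sup]
  by_cases h0 : s = 0
  · subst h0; simp
  · have hM : s.sup ∈ s := sup_mem_s5 s h0
    have hM1 : 1 ≤ s.sup := hpos _ hM
    rw [if_neg (by omega)]
    simp only [Nat.add_sub_cancel]
    rw [add_comm, Multiset.singleton_add, Multiset.cons_erase hM]

lemma stepM_invM (t : Multiset ℕ) (hpos : ∀ p ∈ t, 0 < p) (ht : t ≠ 0)
    (hcond : (t.erase t.sup).sup < t.sup) : stepM (invM t) = t := by
  have hM : t.sup ∈ t := sup_mem_s5 t ht
  have hM1 : 1 ≤ t.sup := hpos _ hM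
  by_cases h1 : t.sup ≤ 1
  · -- t.sup = 1, so t = {1}
    have hsup1 : t.sup = 1 := le_antisymm h1 hM1
    have herase : t.erase t.sup = 0 := by
      by_contra h
      have := hpos _ (Multiset.mem_of_mem_erase (sup_mem_s5 _ h))
      have h2 := Multiset.le_sup (sup_mem_s5 _ h)
      omega
    have ht1 : t = {1} := by
      rw [← Multiset.cons_erase hM, herase, hsup1]; rfl
    rw [invM, herase, if_pos h1]
    simp [stepM, ht1]
  · have hsub : invM t = (t.sup - 1) ::ₘ t.erase t.sup := by
      rw [invM, if_neg h1, add_comm, Multiset.singleton_add]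
    rw [hsub]
    have hsup' : ((t.sup - 1) ::ₘ t.erase t.sup).sup = t.sup - 1 := by
      rw [Multiset.sup_cons, sup_eq_left]
      omega
    rw [stepM, hsup', Multiset.erase_cons_head]
    have : t.sup - 1 + 1 = t.sup := by omega
    rw [this, Multiset.cons_erase hM]

lemma invM_sum (t : Multiset ℕ) (hpos : ∀ p ∈ t, 0 < p) (ht : t ≠ 0) :
    (invM t).sum = t.sum - 1 := by
  have hM : t.sup ∈ t := sup_mem_s5 t ht
  have hM1 : 1 ≤ t.sup := hpos _ hM
  have hsum := Multiset.sum_erase hM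
  rw [invM, Multiset.sum_add]
  by_cases h1 : t.sup ≤ 1
  · rw [if_pos h1]; simp; omega
  · rw [if_neg h1]; simp; omega

lemma invM_pos (t : Multiset ℕ) (hpos : ∀ p ∈ t, 0 < p) :
    ∀ p ∈ invM t, 0 < p := by
  intro p hp
  rw [invM] at hp
  rcases Multiset.mem_add.mp hp with h | h
  · exact hpos _ (Multiset.mem_of_mem_erase h)
  · by_cases h1 : t.sup ≤ 1
    · rw [if_pos h1] at h; simp at h
    · rw [if_neg h1] at h
      rw [Multiset.mem_singleton] at h
      omega


lemma parts_ne_zero_s5 {n : ℕ} (β : (n + 1).Partition) : β.parts ≠ 0 := by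
  intro h
  have := β.parts_sum
  rw [h] at this
  simp at this

def stepP {n : ℕ} (α : n.Partition) : (n + 1).Partition where
  parts := stepM α.parts
  parts_pos := by
    intro p hp
    rw [stepM] at hp
    rcases Multiset.mem_cons.mp hp with rfl | h
    · omega
    · exact α.parts_pos (Multiset.mem_of_mem_erase h)
  parts_sum := by rw [stepM_sum, α.parts_sum]

def invP {n : ℕ} (β : (n + 1).Partition) : n.Partition where
  parts := invM β.parts
  parts_pos := fun hp => invM_pos _ (fun _ h => β.parts_pos h) _ hp
  parts_sum := by
    rw [invM_sum _ (fun _ h => β.parts_pos h) (parts_ne_zero_s5 β), β.parts_sum]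
    omega

lemma key_sum (n : ℕ) :
    (∑ β ∈ Finset.univ.filter
        (fun β : (n + 1).Partition => nthPart β 2 < nthPart β 1), distinctParts β)
      = ∑ α : n.Partition,
          (distinctParts α + if nthPart α 1 = nthPart α 2 then 1 else 0) := by
  apply Finset.sum_nbij' (fun β => invP β) (fun α => stepP α)
  · intro a _
    exact Finset.mem_univ _
  · intro α _
    simp only [Finset.mem_filter]
    refine ⟨Finset.mem_univ _, ?_⟩
    rw [nthPart_one, nthPart_two]
    exact stepM_cond α.parts
  · intro β hβ
    simp only [Finset.mem_filter, nthPart_one, nthPart_two] at hβ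
    apply Nat.Partition.ext
    exact stepM_invM β.parts (fun _ h => β.parts_pos h) (parts_ne_zero_s5 β) hβ.2
  · intro α _
    apply Nat.Partition.ext
    exact invM_stepM α.parts (fun _ h => α.parts_pos h)
  · intro β hβ
    simp only [Finset.mem_filter, nthPart_one, nthPart_two] at hβ
    have hst : stepM (invP β).parts = β.parts :=
      stepM_invM β.parts (fun _ h => β.parts_pos h) (parts_ne_zero_s5 β) hβ.2
    have := stepM_card (invP β).parts (fun p hp => (invP β).parts_pos hp)
    rw [hst] at this
    rw [distinctParts, this, distinctParts, nthPart_one, nthPart_two]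


/-- For every integer `k ≥ 2`, the sum of `ℓ₁(β)` over all partitions `β` of `k - 1` with
`β₁ > β₂` equals the sum of `ℓ₁(α)` over all partitions `α` of `k - 2`, plus the number of
partitions `α` of `k - 2` with `α₁ = α₂` (for `k = 2` the empty partition of `0` satisfies
`α₁ = α₂ = 0`). -/
theorem sum_distinctParts_strictFirstPart (k : ℕ) (hk : 2 ≤ k) :
    (∑ β ∈ Finset.univ.filter
        (fun β : (k - 1).Partition => nthPart β 2 < nthPart β 1), distinctParts β)
      = (∑ α : (k - 2).Partition, distinctParts α)
        + (Finset.univ.filter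
            (fun α : (k - 2).Partition => nthPart α 1 = nthPart α 2)).card := by
  obtain ⟨n, rfl⟩ : ∃ n, k = n + 2 := ⟨k - 2, by omega⟩
  show (∑ β ∈ Finset.univ.filter
        (fun β : (n + 1).Partition => nthPart β 2 < nthPart β 1), distinctParts β)
      = (∑ α : n.Partition, distinctParts α)
        + (Finset.univ.filter
            (fun α : n.Partition => nthPart α 1 = nthPart α 2)).card
  rw [key_sum, Finset.sum_add_distrib, Finset.card_filter]

end SquareKronecker
end

section
/- Let m ≥ 7 be an integer and let k be an integer with 0 ≤ k ≤ m² − 7. Then P_{R(m)}(k) + P_{R(m)}(k+3) > 0 if and only if k ∉ {1, 3, m²−10, m²−8}. -/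
/-!
Every element of `R m` is odd and at least `5`, so a subset sum is `0`, odd and at least `5`, or
at least `5 + 7 = 12`: it never lies in `gaps = {1, 2, 3, 4, 6, 8, 10}`. Since `R m` sums to
`m² - 4`, complementation shows that `m² - 4 - j` is a subset sum whenever `j` is, so it avoids
`gaps` as well. For `m ≥ 10` these two obstructions are the only ones: adding the new element
`2m + 1` to `R m`, a target `j ≤ ((m + 1)² - 4) / 2` is already a subset sum of `R m`, and a larger
target is the complement of a smaller one. The theorem follows for `m ≥ 10` by comparing `k` and
`k + 3` with `gaps`. For `m = 7, 8, 9` the characterization fails (`15` is not a subset sum of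
`R 7`), and the theorem is checked by computation.
-/

namespace SquareKronecker

/-- `R m`: the set `{5, 7, 9, …, 2m - 1}` of odd integers between `5` and `2m - 1`. -/
def R (m : ℕ) : Finset ℕ :=
  (Finset.range (2 * m)).filter (fun j => Odd j ∧ 5 ≤ j)

/-- `P m j`: the number of subsets of `R m` whose elements sum to `j`
(so `P m 0 = 1`, counting the empty subset). -/
def P (m j : ℕ) : ℕ :=
  ((R m).powerset.filter (fun S => S.sum id = j)).card

def gaps : Finset ℕ := {1, 2, 3, 4, 6, 8, 10}

lemma mem_gaps {j : ℕ} : j ∈ gaps ↔ j = 1 ∨ j = 2 ∨ j = 3 ∨ j = 4 ∨ j = 6 ∨ j = 8 ∨ j = 10 := by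
  simp only [gaps, Finset.mem_insert, Finset.mem_singleton]

lemma sum_notMem_gaps {A : Finset ℕ} (hA : ∀ x ∈ A, Odd x ∧ 5 ≤ x) : A.sum id ∉ gaps := by
  have hparity : A.sum id % 2 = A.card % 2 := by
    rw [Finset.sum_nat_mod,
      Finset.sum_congr rfl fun x hx => (Nat.odd_iff.mp (hA x hx).1 : id x % 2 = 1),
      Finset.sum_const, smul_eq_mul, mul_one]
  rw [mem_gaps]
  rcases Nat.lt_or_ge A.card 2 with hcard | hcard
  · interval_cases h : A.card
    · simp [Finset.card_eq_zero.mp h]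
    · obtain ⟨x, rfl⟩ := Finset.card_eq_one.mp h
      obtain ⟨⟨t, rfl⟩, h5⟩ := hA x (Finset.mem_singleton_self _)
      rw [Finset.sum_singleton, id_eq]
      omega
  · obtain ⟨a, ha, b, hb, hab⟩ := Finset.one_lt_card.mp hcard
    have hpair : a + b ≤ A.sum id := by
      have hsub : {a, b} ⊆ A := Finset.insert_subset ha (Finset.singleton_subset_iff.mpr hb)
      simpa [Finset.sum_pair hab] using Finset.sum_le_sum_of_subset (f := id) hsub
    obtain ⟨⟨a', rfl⟩, ha5⟩ := hA a ha
    obtain ⟨⟨b', rfl⟩, hb5⟩ := hA b hb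
    omega

lemma mem_R {m j : ℕ} : j ∈ R m ↔ j < 2 * m ∧ Odd j ∧ 5 ≤ j := by
  simp [R]

lemma R_succ {m : ℕ} (hm : 2 ≤ m) : R (m + 1) = insert (2 * m + 1) (R m) := by
  ext j
  simp only [mem_R, Finset.mem_insert]
  constructor
  · rintro ⟨hlt, hodd, h5⟩
    rcases Nat.lt_or_ge j (2 * m) with h | h
    · exact Or.inr ⟨h, hodd, h5⟩
    · obtain ⟨t, rfl⟩ := hodd
      exact Or.inl (by omega)
  · rintro (rfl | ⟨hlt, hodd, h5⟩)
    · exact ⟨by omega, odd_two_mul_add_one m, by omega⟩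
    · exact ⟨by omega, hodd, h5⟩

lemma sum_R (m : ℕ) : (R m).sum id = m ^ 2 - 4 := by
  rcases Nat.lt_or_ge m 2 with hm | hm
  · interval_cases m <;> decide
  induction m, hm using Nat.le_induction with
  | base => decide
  | succ n hn ih =>
    rw [R_succ hn, Finset.sum_insert (by rw [mem_R]; omega), ih, id_eq]
    have : 2 ^ 2 ≤ n ^ 2 := Nat.pow_le_pow_left hn 2
    have : (n + 1) ^ 2 = n ^ 2 + 2 * n + 1 := by ring
    omega

lemma P_pos_iff {m j : ℕ} : 0 < P m j ↔ ∃ A ⊆ R m, A.sum id = j := by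
  simp [P, Finset.card_pos, Finset.filter_nonempty_iff]

section

variable {m j : ℕ}

lemma le_of_P_pos (h : 0 < P m j) : j ≤ m ^ 2 - 4 := by
  obtain ⟨A, hA, rfl⟩ := P_pos_iff.mp h
  rw [← sum_R]
  exact Finset.sum_le_sum_of_subset hA

lemma P_pos_compl (h : 0 < P m j) : 0 < P m (m ^ 2 - 4 - j) := by
  obtain ⟨A, hA, rfl⟩ := P_pos_iff.mp h
  refine P_pos_iff.mpr ⟨R m \ A, Finset.sdiff_subset, ?_⟩
  rw [← sum_R, ← Finset.sum_sdiff hA, Nat.add_sub_cancel]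

lemma notMem_gaps_of_P_pos (h : 0 < P m j) : j ∉ gaps := by
  obtain ⟨A, hA, rfl⟩ := P_pos_iff.mp h
  exact sum_notMem_gaps fun x hx => (mem_R.mp (hA hx)).2

lemma P_succ_pos (hm : 2 ≤ m) (h : 0 < P m j) : 0 < P (m + 1) j := by
  obtain ⟨A, hA, hsum⟩ := P_pos_iff.mp h
  exact P_pos_iff.mpr ⟨A, (R_succ hm).symm ▸ hA.trans (Finset.subset_insert _ _), hsum⟩

set_option maxRecDepth 10000 in
lemma P_pos_of_notMem_gaps (hm : 10 ≤ m) (hj : j ≤ m ^ 2 - 4) (hjg : j ∉ gaps)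
    (hjg' : m ^ 2 - 4 - j ∉ gaps) : 0 < P m j := by
  induction m, hm using Nat.le_induction generalizing j with
  | base =>
    have h96 : ∀ j < 97, j ∉ gaps → 96 - j ∉ gaps → 0 < P 10 j := by decide
    exact h96 j (by omega) hjg hjg'
  | succ n hn ih =>
    have hsq : (n + 1) ^ 2 = n ^ 2 + 2 * n + 1 := by ring
    have hbig : 2 * n + 27 ≤ n ^ 2 := by nlinarith
    have hsmall : ∀ i, 2 * i ≤ (n + 1) ^ 2 - 4 → i ∉ gaps → 0 < P (n + 1) i := by
      intro i hi hig
      refine P_succ_pos (by omega) (ih (by omega) hig ?_)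
      rw [mem_gaps]
      omega
    rcases le_or_gt (2 * j) ((n + 1) ^ 2 - 4) with hj2 | hj2
    · exact hsmall j hj2 hjg
    · have hcompl := P_pos_compl (hsmall _ (by omega) hjg')
      rwa [Nat.sub_sub_self hj] at hcompl

lemma P_pos_iff_of_ten_le (hm : 10 ≤ m) :
    0 < P m j ↔ j ≤ m ^ 2 - 4 ∧ j ∉ gaps ∧ m ^ 2 - 4 - j ∉ gaps :=
  ⟨fun h => ⟨le_of_P_pos h, notMem_gaps_of_P_pos h, notMem_gaps_of_P_pos (P_pos_compl h)⟩,
    fun ⟨hj, hjg, hjg'⟩ => P_pos_of_notMem_gaps hm hj hjg hjg'⟩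

end

lemma P_add_P_add_three_pos_iff_of_lt_ten {m : ℕ} (hm : 7 ≤ m) (hm' : m < 10) :
    ∀ k ≤ m ^ 2 - 7, 0 < P m k + P m (k + 3) ↔
      k ∉ ({1, 3, m ^ 2 - 10, m ^ 2 - 8} : Finset ℕ) := by
  interval_cases m <;> decide

/-- Let `m ≥ 7` and `0 ≤ k ≤ m² - 7`. Then `P_{R(m)}(k) + P_{R(m)}(k+3) > 0` if and only if
`k ∉ {1, 3, m² - 10, m² - 8}`. -/
theorem P_pos_iff_three (m k : ℕ) (hm : 7 ≤ m) (hk : k ≤ m ^ 2 - 7) :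
    0 < P m k + P m (k + 3) ↔
      k ∉ ({1, 3, m ^ 2 - 10, m ^ 2 - 8} : Finset ℕ) := by
  rcases Nat.lt_or_ge m 10 with hm' | hm'
  · exact P_add_P_add_three_pos_iff_of_lt_ten hm hm' k hk
  have hsq : 100 ≤ m ^ 2 := by nlinarith
  rw [Nat.add_pos_iff_pos_or_pos, P_pos_iff_of_ten_le hm', P_pos_iff_of_ten_le hm']
  simp only [mem_gaps, Finset.mem_insert, Finset.mem_singleton]
  omega

end SquareKronecker
end
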